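/- arXiv:2602.06105 — 5 statements merged into one kernel-verified Lean document; each statement's English description precedes it below -/
import Mathlib

section
/- Let f : ℝⁿ → ℝᵏ be a continuous classifier and ξ ∈ ℝⁿ a point with unique predicted class c, i.e., f_c(ξ) > f_{c'}(ξ) for all c' ≠ c. Define γ as the infimum over c' ≠ c of the distance from ξ to the set B_{c,c'} = {x : f_c(x) = f_{c'}(x) = max_i f_i(x)}, and γ̃ as the infimum over c' ≠ c of the distance from ξ to the set V_{c,c'} = {x : f_c(x) = f_{c'}(x)}. Then γ = γ̃. -/
/-!
Every point of `V_{c,c'}` is shadowed by a point of some `B_{c,i}` that is at least as close to `ξ`: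
along the segment from `ξ` to `x ∈ V_{c,c'}`, the margin `f_c - max_{i ≠ c} f_i` is positive at `ξ`
and non-positive at `x`, so by the intermediate value theorem it vanishes somewhere on the segment,
which is exactly a point where `c` ties for the maximum with some other class.
-/

open Finset

theorem IsPreconnected.exists_tie_at_max {X ι : Type*} [TopologicalSpace X] [Fintype ι]
    [DecidableEq ι] {s : Set X} (hs : IsPreconnected s) {f : X → ι → ℝ} (hf : ContinuousOn f s)
    {a b : X} (ha : a ∈ s) (hb : b ∈ s) {c c' : ι} (hc : ∀ i, i ≠ c → f a i < f a c)
    (hc' : c' ≠ c) (hb' : f b c ≤ f b c') :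
    ∃ y ∈ s, ∃ i, i ≠ c ∧ f y c = f y i ∧ ∀ j, f y j ≤ f y c := by
  have hne : (univ.erase c).Nonempty := ⟨c', mem_erase.2 ⟨hc', mem_univ _⟩⟩
  set margin : X → ℝ := fun y => f y c - (univ.erase c).sup' hne (f y ·)
  have hmargin : ContinuousOn margin s :=
    ((continuous_apply c).comp_continuousOn hf).sub <|
      ContinuousOn.finset_sup'_apply hne fun i _ => (continuous_apply i).comp_continuousOn hf
  have hmargin_a : 0 ≤ margin a := by
    obtain ⟨i, hi, hsup⟩ := exists_mem_eq_sup' hne (f a ·)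
    simpa [margin, hsup] using (hc i (ne_of_mem_erase hi)).le
  have hmargin_b : margin b ≤ 0 :=
    sub_nonpos.2 (hb'.trans (le_sup' (f b ·) (mem_erase.2 ⟨hc', mem_univ _⟩)))
  obtain ⟨y, hy, hy0⟩ := hs.intermediate_value hb ha hmargin ⟨hmargin_b, hmargin_a⟩
  obtain ⟨i, hi, hsup⟩ := exists_mem_eq_sup' hne (f y ·)
  have htie : f y c = f y i := by simpa [margin, hsup, sub_eq_zero] using hy0
  refine ⟨y, hy, i, ne_of_mem_erase hi, htie, fun j => ?_⟩
  rcases eq_or_ne j c with rfl | hj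
  · exact le_rfl
  · exact (le_sup' (f y ·) (mem_erase.2 ⟨hj, mem_univ _⟩)).trans (hsup ▸ htie.ge)

theorem edist_le_edist_of_mem_segment {E : Type*} [SeminormedAddCommGroup E] [NormedSpace ℝ E]
    {x y z : E} (hy : y ∈ segment ℝ x z) : edist x y ≤ edist x z := by
  rw [edist_dist, edist_dist, ← dist_add_dist_of_mem_segment hy]
  exact ENNReal.ofReal_le_ofReal (le_add_of_nonneg_right dist_nonneg)

theorem stmt0 {n k : ℕ}
    (f : EuclideanSpace ℝ (Fin n) → Fin k → ℝ) (hf : Continuous f)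
    (ξ : EuclideanSpace ℝ (Fin n)) (c : Fin k)
    (hc : ∀ c' : Fin k, c' ≠ c → f ξ c' < f ξ c) :
    (⨅ c' : {c' : Fin k // c' ≠ c},
        EMetric.infEdist ξ {x | f x c = f x c'.1 ∧ ∀ i, f x i ≤ f x c}) =
    (⨅ c' : {c' : Fin k // c' ≠ c},
        EMetric.infEdist ξ {x | f x c = f x c'.1}) := by
  refine le_antisymm (le_iInf fun c' => Metric.le_infEDist.2 fun x hx => ?_)
    (iInf_mono fun c' => Metric.infEDist_anti fun x hx => hx.1)
  obtain ⟨y, hy, i, hi, hyB⟩ := (convex_segment ξ x).isPreconnected.exists_tie_at_max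
    hf.continuousOn (left_mem_segment ℝ ξ x) (right_mem_segment ℝ ξ x) hc c'.2 hx.le
  calc _ ≤ Metric.infEDist ξ {x | f x c = f x i ∧ ∀ j, f x j ≤ f x c} :=
        iInf_le _ (⟨i, hi⟩ : {c' : Fin k // c' ≠ c})
    _ ≤ edist ξ y := Metric.infEDist_le_edist_of_mem hyB
    _ ≤ edist ξ x := edist_le_edist_of_mem_segment hy
end

section
/- Define c(s,d) = (d!)² / (2^{2s} (s!)² (d−2s)!) for integers d ≥ 2 and 0 ≤ s ≤ ⌊d/2⌋. Then Σ_{s=0}^{⌊d/2⌋} s · c(s,d) = d(d−1)(2d−3)!!/2. -/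
/-!
Write `c s d = (d!)² / (2^{2s} (s!)² (d-2s)!)`, `A d = ∑ₛ c s d` and `B d = ∑ₛ s · c s d`.
Two term-wise recurrences drive everything: `(d+1-2s) c s (d+1) = (d+1)² c s d` (the ratio
`c s d / c s (d-1) = d²/(d-2s)`) and `4(s+1)² c (s+1) d = (d-2s)(d-2s-1) c s d`.
Summing the second one over `s` telescopes to `(4d-2) B d = (d²-d) A d`; summing the first gives
`(d+1) A (d+1) - 2 B (d+1) = (d+1)² A d`. Together they yield `A (d+1) = (2d+1) A d`, hence
`A d = (2d-1)!!`, and then `B d = d(d-1)(2d-3)!!/2`.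
-/

open Finset Nat

namespace DoubleFactorialSum

noncomputable def c (s d : ℕ) : ℝ :=
  (d ! : ℝ) ^ 2 / (2 ^ (2 * s) * (s ! : ℝ) ^ 2 * ((d - 2 * s)! : ℝ))

lemma sub_two_mul_mul_c_succ {s d : ℕ} (h : 2 * s ≤ d) :
    ((d : ℝ) + 1 - 2 * s) * c s (d + 1) = ((d : ℝ) + 1) ^ 2 * c s d := by
  obtain ⟨t, rfl⟩ := Nat.exists_eq_add_of_le h
  rw [c, c, show 2 * s + t + 1 - 2 * s = t + 1 by omega, Nat.add_sub_cancel_left,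
    Nat.factorial_succ, Nat.factorial_succ]
  have := Nat.factorial_pos s
  have := Nat.factorial_pos t
  have := Nat.factorial_pos (2 * s + t)
  push_cast
  field_simp
  ring

lemma mul_c_succ {s d : ℕ} (h : 2 * (s + 1) ≤ d) :
    4 * ((s : ℝ) + 1) ^ 2 * c (s + 1) d = ((d : ℝ) - 2 * s) * ((d : ℝ) - 2 * s - 1) * c s d := by
  obtain ⟨t, rfl⟩ := Nat.exists_eq_add_of_le h
  rw [c, c, Nat.add_sub_cancel_left, show 2 * (s + 1) + t - 2 * s = t + 1 + 1 by omega,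
    Nat.factorial_succ (t + 1), Nat.factorial_succ t, Nat.factorial_succ s]
  have := Nat.factorial_pos s
  have := Nat.factorial_pos t
  have := Nat.factorial_pos (2 * (s + 1) + t)
  push_cast [pow_succ, mul_add]
  field_simp
  ring

lemma sum_mul_c (d : ℕ) :
    (4 * (d : ℝ) - 2) * ∑ s ∈ range (d / 2 + 1), (s : ℝ) * c s d
      = ((d : ℝ) ^ 2 - d) * ∑ s ∈ range (d / 2 + 1), c s d := by
  have hlast : ((d : ℝ) - 2 * (d / 2 : ℕ)) * ((d : ℝ) - 2 * (d / 2 : ℕ) - 1) = 0 := by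
    have h : (d : ℝ) = 2 * (d / 2 : ℕ) ∨ (d : ℝ) = 2 * (d / 2 : ℕ) + 1 := by norm_cast; omega
    rcases h with h | h <;> rw [h] <;> ring
  have hshift : ∑ s ∈ range (d / 2 + 1), 4 * (s : ℝ) ^ 2 * c s d
      = ∑ s ∈ range (d / 2 + 1), ((d : ℝ) - 2 * s) * ((d : ℝ) - 2 * s - 1) * c s d := by
    -- shift the index; the boundary terms at `s = 0` and `s = d / 2` vanish
    rw [sum_range_succ', sum_range_succ, hlast]
    push_cast
    simp only [zero_pow two_ne_zero, mul_zero, zero_mul, add_zero]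
    refine sum_congr rfl fun s hs => mul_c_succ ?_
    rw [mem_range] at hs
    omega
  have hexpand (s : ℕ) : ((d : ℝ) - 2 * s) * ((d : ℝ) - 2 * s - 1) * c s d
      = ((d : ℝ) ^ 2 - d) * c s d - (4 * (d : ℝ) - 2) * (s * c s d) + 4 * (s : ℝ) ^ 2 * c s d := by
    ring
  simp only [hexpand, sum_add_distrib, sum_sub_distrib, ← mul_sum] at hshift
  linarith

lemma sum_c_succ_sub (d : ℕ) :
    ((d : ℝ) + 1) * ∑ s ∈ range ((d + 1) / 2 + 1), c s (d + 1)
      - 2 * ∑ s ∈ range ((d + 1) / 2 + 1), (s : ℝ) * c s (d + 1)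
      = ((d : ℝ) + 1) ^ 2 * ∑ s ∈ range (d / 2 + 1), c s d := by
  rw [mul_sum, mul_sum, mul_sum, ← sum_sub_distrib]
  have hsub : range (d / 2 + 1) ⊆ range ((d + 1) / 2 + 1) := range_subset_range.2 (by omega)
  rw [← sum_subset hsub]
  · refine sum_congr rfl fun s hs => ?_
    rw [mem_range] at hs
    rw [← sub_two_mul_mul_c_succ (by omega)]
    ring
  · intro s hs hs'
    rw [mem_range] at hs hs'
    have h : (d : ℝ) + 1 = 2 * s := by norm_cast; omega
    linear_combination c s (d + 1) * h

lemma sum_c_succ (d : ℕ) :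
    ∑ s ∈ range ((d + 1) / 2 + 1), c s (d + 1) = (2 * d + 1) * ∑ s ∈ range (d / 2 + 1), c s d := by
  have hB := sum_mul_c (d + 1)
  have hS := sum_c_succ_sub d
  push_cast at hB
  have h : ((d : ℝ) + 1) ^ 2 * ∑ s ∈ range ((d + 1) / 2 + 1), c s (d + 1)
      = ((d : ℝ) + 1) ^ 2 * ((2 * d + 1) * ∑ s ∈ range (d / 2 + 1), c s d) := by
    linear_combination (2 * (d : ℝ) + 1) * hS + hB
  exact mul_left_cancel₀ (by positivity) h

lemma sum_c (d : ℕ) : ∑ s ∈ range (d / 2 + 1), c s d = ((2 * d - 1)‼ : ℝ) := by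
  induction d with
  | zero => simp [c]
  | succ n ih =>
    rw [sum_c_succ, ih, show 2 * (n + 1) - 1 = 2 * n + 1 by omega, doubleFactorial_add_one]
    push_cast
    ring

end DoubleFactorialSum

open DoubleFactorialSum in
theorem stmt5_general (d : ℕ) :
    ∑ s ∈ Finset.range (d/2 + 1),
      (s : ℝ) * ((Nat.factorial d : ℝ)^2 /
        (2^(2*s) * (Nat.factorial s : ℝ)^2 * (Nat.factorial (d - 2*s) : ℝ))) =
    (d : ℝ) * ((d : ℝ) - 1) * (Nat.doubleFactorial (2*d - 3) : ℝ) / 2 := by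
  change ∑ s ∈ range (d / 2 + 1), (s : ℝ) * c s d = _
  obtain _ | n := d
  · simp
  have hB := sum_mul_c (n + 1)
  rw [sum_c, show 2 * (n + 1) - 1 = 2 * n + 1 by omega, doubleFactorial_add_one] at hB
  rw [show 2 * (n + 1) - 3 = 2 * n - 1 by omega]
  refine mul_left_cancel₀ (ne_of_gt ?_) (hB.trans ?_)
  · push_cast
    linarith [(n.cast_nonneg : (0 : ℝ) ≤ n)]
  · push_cast
    ring

theorem stmt5 (d : ℕ) (hd : 2 ≤ d) :
    ∑ s ∈ Finset.range (d/2 + 1),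
      (s : ℝ) * ((Nat.factorial d : ℝ)^2 /
        (2^(2*s) * (Nat.factorial s : ℝ)^2 * (Nat.factorial (d - 2*s) : ℝ))) =
    (d : ℝ) * ((d : ℝ) - 1) * (Nat.doubleFactorial (2*d - 3) : ℝ) / 2 :=
  stmt5_general d
end

section
/- Let K(x,x') = Σ_{s=0}^{⌊d/2⌋} c(s,d) (x²+1)^s ((x')²+1)^s (x x'+1)^{d−2s} for an integer d ≥ 1. Then ∂_x K(x,x')|_{x'=x} = d·(2d−1)!!·x·(x²+1)^{d−1}. -/
/-!
At `y = x` the factors `(y² + 1)^s` and `(yx + 1)^(d - 2s)` of the `s`-th summand contribute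
`2s` and `d - 2s` to the logarithmic derivative, so each summand differentiates to
`c(s,d) · d · x · (x² + 1)^(d - 1)`. It remains to show `∑ₛ c(s,d) = (2d - 1)!!`. Up to the factor
`d!/2^d`, `c(s,d)` is `C(d,s) C(d-s,s) 2^(d-2s)`, the number of ways to get `X^d` from
`(X² + 2X + 1)^d` using `X²` exactly `s` times; summing over `s` gives the `X^d`-coefficient of
`(X + 1)^(2d)`, which is `C(2d,d)`, and `d! C(2d,d) / 2^d = (2d)! / (2^d d!) = (2d - 1)!!`.
-/

open Finset Polynomial Nat

theorem sum_choose_mul_choose_mul_two_pow (d : ℕ) :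
    ∑ s ∈ range (d + 1), d.choose s * (d - s).choose s * 2 ^ (d - 2 * s) = (2 * d).choose d := by
  have hsq : (X + 1 : ℕ[X]) ^ 2 = X * (X + C 2) + 1 := by
    rw [C_ofNat]; ring
  have hcoeff : ∀ k ∈ range (d + 1),
      ((X * (X + C 2)) ^ k * 1 ^ (d - k) * (d.choose k : ℕ[X])).coeff d
        = d.choose k * k.choose (d - k) * 2 ^ (k - (d - k)) := by
    intro k hk
    rw [one_pow, mul_one, coeff_mul_natCast, mul_pow, coeff_X_pow_mul', coeff_X_add_C_pow,
      if_pos (by simpa [Nat.lt_succ_iff] using hk)]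
    simp only [Nat.cast_id]
    ring
  calc ∑ s ∈ range (d + 1), d.choose s * (d - s).choose s * 2 ^ (d - 2 * s)
      = ∑ k ∈ range (d + 1), d.choose k * k.choose (d - k) * 2 ^ (k - (d - k)) := by
        conv_rhs => rw [← sum_range_reflect]
        refine sum_congr rfl fun s hs => ?_
        have hs : s ≤ d := by simpa [Nat.lt_succ_iff] using hs
        rw [add_tsub_cancel_right, tsub_tsub_cancel_of_le hs, choose_symm hs,
          show d - s - s = d - 2 * s by omega]
    _ = ((X * (X + C 2) + 1) ^ d).coeff d := by
        rw [add_pow, finsetSum_coeff, sum_congr rfl hcoeff]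
    _ = (2 * d).choose d := by
        rw [← hsq, ← pow_mul, coeff_X_add_one_pow, Nat.cast_id]

theorem factorial_mul_choose_two_mul_self (d : ℕ) :
    d ! * (2 * d).choose d = 2 ^ d * (2 * d - 1)‼ := by
  rcases d with _ | n
  · rfl
  · have hchoose := choose_mul_factorial_mul_factorial (show n + 1 ≤ 2 * (n + 1) by omega)
    have hfact : (2 * (n + 1))! = 2 ^ (n + 1) * (n + 1)! * (2 * n + 1)‼ := by
      rw [← doubleFactorial_two_mul, show 2 * (n + 1) = 2 * n + 1 + 1 by ring,
        factorial_eq_mul_doubleFactorial]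
    rw [show 2 * (n + 1) - (n + 1) = n + 1 by omega, hfact] at hchoose
    rw [show 2 * (n + 1) - 1 = 2 * n + 1 by omega]
    apply Nat.eq_of_mul_eq_mul_right (factorial_pos (n + 1))
    linarith [hchoose]

theorem natCast_mul_pow_sub_one_mul_pow {R : Type*} [CommSemiring R] (n k : ℕ) (a : R) :
    (n : R) * a ^ (n - 1) * a ^ k = n * a ^ (n + k - 1) := by
  rcases n with _ | n
  · simp
  · rw [add_tsub_cancel_right, show n + 1 + k - 1 = n + k by omega, pow_add, mul_assoc]

theorem hasDerivAt_kernel_term_diag (s n : ℕ) (x : ℝ) :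
    HasDerivAt (fun y : ℝ => (y ^ 2 + 1) ^ s * (x ^ 2 + 1) ^ s * (y * x + 1) ^ n)
      ((2 * s + n : ℕ) * x * (x ^ 2 + 1) ^ (2 * s + n - 1)) x := by
  have hleft : HasDerivAt (fun y : ℝ => (y ^ 2 + 1) ^ s)
      (s * (x ^ 2 + 1) ^ (s - 1) * (2 * x)) x := by
    simpa using ((hasDerivAt_pow 2 x).add_const 1).fun_pow s
  have hright : HasDerivAt (fun y : ℝ => (y * x + 1) ^ n)
      (n * (x ^ 2 + 1) ^ (n - 1) * x) x := by
    simpa [sq] using (((hasDerivAt_id x).mul_const x).add_const 1).fun_pow n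
  refine ((hleft.mul_const ((x ^ 2 + 1) ^ s)).mul hright).congr_deriv ?_
  have h₁ := natCast_mul_pow_sub_one_mul_pow s (s + n) (x ^ 2 + 1)
  have h₂ := natCast_mul_pow_sub_one_mul_pow n (s + s) (x ^ 2 + 1)
  rw [show s + (s + n) - 1 = 2 * s + n - 1 by omega] at h₁
  rw [show n + (s + s) - 1 = 2 * s + n - 1 by omega] at h₂
  push_cast
  linear_combination (2 * x) * h₁ + x * h₂

theorem sum_factorial_sq_div_eq_doubleFactorial (d : ℕ) :
    ∑ s ∈ range (d / 2 + 1), (d ! : ℝ) ^ 2 / (2 ^ (2 * s) * (s ! : ℝ) ^ 2 * ((d - 2 * s)! : ℝ))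
      = ((2 * d - 1)‼ : ℝ) := by
  have hterm : ∀ s ∈ range (d / 2 + 1),
      (d ! : ℝ) ^ 2 / (2 ^ (2 * s) * (s ! : ℝ) ^ 2 * ((d - 2 * s)! : ℝ))
        = d ! / 2 ^ d * ((d.choose s * (d - s).choose s * 2 ^ (d - 2 * s) : ℕ) : ℝ) := by
    intro s hs
    have hs : 2 * s ≤ d := by have := mem_range.1 hs; omega
    push_cast
    rw [cast_choose ℝ (show s ≤ d by omega), cast_choose ℝ (show s ≤ d - s by omega),
      show d - s - s = d - 2 * s by omega, pow_sub₀ _ two_ne_zero hs]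
    field_simp
  have hextend : ∑ s ∈ range (d / 2 + 1), d.choose s * (d - s).choose s * 2 ^ (d - 2 * s)
      = ∑ s ∈ range (d + 1), d.choose s * (d - s).choose s * 2 ^ (d - 2 * s) := by
    refine sum_subset (range_subset_range.2 (by omega)) fun s _ hs => ?_
    rw [choose_eq_zero_of_lt (show d - s < s by rw [mem_range] at hs; omega), mul_zero, zero_mul]
  have hcentral : (d ! : ℝ) * (2 * d).choose d = 2 ^ d * (2 * d - 1)‼ := by
    exact_mod_cast factorial_mul_choose_two_mul_self d
  rw [sum_congr rfl hterm, ← mul_sum, ← Nat.cast_sum, hextend, sum_choose_mul_choose_mul_two_pow,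
    div_mul_eq_mul_div, hcentral]
  field_simp

theorem stmt8_general (d : ℕ) (x : ℝ) :
    deriv (fun y : ℝ => ∑ s ∈ Finset.range (d/2 + 1),
      ((Nat.factorial d : ℝ)^2 /
        (2^(2*s) * (Nat.factorial s : ℝ)^2 * (Nat.factorial (d - 2*s) : ℝ))) *
        (y^2 + 1)^s * (x^2 + 1)^s * (y*x + 1)^(d - 2*s)) x =
    (d : ℝ) * (Nat.doubleFactorial (2*d - 1) : ℝ) * x * (x^2 + 1)^(d - 1) := by
  have hterm : ∀ s ∈ range (d / 2 + 1),
      HasDerivAt (fun y : ℝ => (d ! : ℝ) ^ 2 / (2 ^ (2 * s) * (s ! : ℝ) ^ 2 * ((d - 2 * s)! : ℝ)) *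
        (y ^ 2 + 1) ^ s * (x ^ 2 + 1) ^ s * (y * x + 1) ^ (d - 2 * s))
        ((d ! : ℝ) ^ 2 / (2 ^ (2 * s) * (s ! : ℝ) ^ 2 * ((d - 2 * s)! : ℝ)) *
          (d * x * (x ^ 2 + 1) ^ (d - 1))) x := by
    intro s hs
    have hd : 2 * s + (d - 2 * s) = d := by have := mem_range.1 hs; omega
    have hderiv := (hasDerivAt_kernel_term_diag s (d - 2 * s) x).const_mul
      ((d ! : ℝ) ^ 2 / (2 ^ (2 * s) * (s ! : ℝ) ^ 2 * ((d - 2 * s)! : ℝ)))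
    rw [hd] at hderiv
    simpa only [mul_assoc] using hderiv
  rw [(HasDerivAt.fun_sum hterm).deriv, ← sum_mul, sum_factorial_sq_div_eq_doubleFactorial]
  ring

theorem stmt8 (d : ℕ) (hd : 1 ≤ d) (x : ℝ) :
    deriv (fun y : ℝ => ∑ s ∈ Finset.range (d/2 + 1),
      ((Nat.factorial d : ℝ)^2 /
        (2^(2*s) * (Nat.factorial s : ℝ)^2 * (Nat.factorial (d - 2*s) : ℝ))) *
        (y^2 + 1)^s * (x^2 + 1)^s * (y*x + 1)^(d - 2*s)) x =
    (d : ℝ) * (Nat.doubleFactorial (2*d - 1) : ℝ) * x * (x^2 + 1)^(d - 1) :=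
  stmt8_general d x
end

section
/- For every integer d ≥ 1, ∫_{−∞}^{∞} (d/√(2d−1)) · 1/(π(x²+1)) dx = d/√(2d−1). More precisely, the Kac–Rice density ρ(x) = √(det K_F(x,x)) / (π K(x,x)) with K(x,x) = (2d−1)!!(x²+1)^d and det K_F(x,x) = d²(2d−1)((2d−3)!!)²(x²+1)^{2d−2} satisfies ρ(x) = d/(√(2d−1)·π·(x²+1)), and ∫_ℝ ρ(x) dx = d/√(2d−1). -/
/-!
Write `y = x² + 1` and `a = 2d - 1`. Since `(2d-1)‼ = a · (2d-3)‼`, the square root in the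
numerator is `d · √a · (2d-3)‼ · y^(d-1)`, and dividing by `π · a · (2d-3)‼ · y^d` leaves
`d / (√a · π · y)`: a multiple of the Cauchy density, whose integral over `ℝ` is `π`.
-/

open Real

open scoped Nat in
theorem Nat.doubleFactorial_two_mul_sub_one {d : ℕ} (hd : 1 ≤ d) :
    (2 * d - 1)‼ = (2 * d - 1) * (2 * d - 3)‼ := by
  rw [show 2 * d - 1 = 2 * d - 2 + 1 by omega, Nat.doubleFactorial_add_one,
    show 2 * d - 2 - 1 = 2 * d - 3 by omega]

theorem sqrt_sq_mul_pow_div_pi_mul_pow {d : ℕ} (hd : 1 ≤ d) {a M y : ℝ}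
    (ha : 0 < a) (hM : 0 < M) (hy : 0 < y) :
    √((d : ℝ) ^ 2 * a * M ^ 2 * y ^ (2 * d - 2)) / (π * (a * M * y ^ d))
      = d / (√a * π * y) := by
  have hsq : (d : ℝ) ^ 2 * a * M ^ 2 * y ^ (2 * d - 2) = (d * √a * M * y ^ (d - 1)) ^ 2 := by
    rw [show 2 * d - 2 = (d - 1) * 2 by omega, pow_mul]
    linear_combination (-((d : ℝ) ^ 2 * M ^ 2 * (y ^ (d - 1)) ^ 2)) * sq_sqrt ha.le
  have hpow : y ^ d = y ^ (d - 1) * y := by rw [← pow_succ, Nat.sub_add_cancel hd]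
  have hsa : 0 < √a := sqrt_pos.mpr ha
  rw [hsq, sqrt_sq (by positivity), hpow]
  field_simp
  rw [sq_sqrt ha.le]

theorem integral_div_sq_add_one (c : ℝ) : ∫ x : ℝ, c / (x ^ 2 + 1) = c * π := by
  simp_rw [div_eq_mul_inv, add_comm _ (1 : ℝ)]
  rw [MeasureTheory.integral_const_mul, integral_univ_inv_one_add_sq]

theorem stmt10 (d : ℕ) (hd : 1 ≤ d) (ρ : ℝ → ℝ)
    (hρ : ρ = fun x => Real.sqrt
        ((d:ℝ)^2 * (2*(d:ℝ) - 1) * (Nat.doubleFactorial (2*d - 3) : ℝ)^2 * (x^2 + 1)^(2*d - 2)) /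
      (Real.pi * ((Nat.doubleFactorial (2*d - 1) : ℝ) * (x^2 + 1)^d))) :
    (∀ x : ℝ, ρ x = (d : ℝ) / (Real.sqrt (2*(d:ℝ) - 1) * Real.pi * (x^2 + 1))) ∧
    ∫ x : ℝ, ρ x = (d : ℝ) / Real.sqrt (2*(d:ℝ) - 1) := by
  have ha : (0 : ℝ) < 2 * d - 1 := by
    have : (1 : ℝ) ≤ d := by exact_mod_cast hd
    linarith
  have hdf : (Nat.doubleFactorial (2 * d - 1) : ℝ)
      = (2 * d - 1) * (Nat.doubleFactorial (2 * d - 3) : ℝ) := by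
    rw [Nat.doubleFactorial_two_mul_sub_one hd, Nat.cast_mul, Nat.cast_sub (by omega)]
    push_cast
    ring
  have hpoint : ∀ x : ℝ, ρ x = (d : ℝ) / (√(2 * d - 1) * π * (x ^ 2 + 1)) := fun x => by
    rw [hρ, hdf]
    exact sqrt_sq_mul_pow_div_pi_mul_pow hd ha (by exact_mod_cast Nat.doubleFactorial_pos _)
      (by positivity)
  refine ⟨hpoint, ?_⟩
  simp_rw [hpoint, ← div_div]
  rw [integral_div_sq_add_one]
  field_simp
end

section
/- Let A ∈ ℝ^{n×n} be symmetric with spectral decomposition A = U Σ Uᵀ, let b ∈ ℝⁿ, c ∈ ℝ, and let M = [[A, b/2],[bᵀ/2, c]] ∈ ℝ^{(n+1)×(n+1)}. Write b̃ = Uᵀ b, partition indices into I_range = {i : σᵢ ≠ 0} and I_ker = {i : σᵢ = 0}, and set S = c − Σ_{j ∈ I_range} b̃_j² / (4σ_j). Then rank(M) = rank(A) + rank(K), where K = [[0, b̃_ker/2],[b̃_kerᵀ/2, S]]; in particular: rank(M) = rank(A) iff b̃_ker = 0 and S = 0; rank(M) = rank(A)+1 iff b̃_ker = 0 and S ≠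 0; and rank(M) = rank(A)+2 iff b̃_ker ≠ 0. -/
/-!
Conjugating `M` by the orthogonal matrix `diag(U, 1)` replaces `A` by `diag σ` and `b` by `b̃`
without changing the rank. After reordering the indices as (range, kernel, last), the range block
is an invertible diagonal matrix whose Schur complement is exactly `K`, so the rank splits as
`rank A + rank K`. Finally `K = [[0, v], [vᵀ, S]]` has rank `0` or `1` when `v = 0`, according
to `S`; when `v i ≠ 0` it contains the invertible minor `[[0, v i], [v i, S]]` and factors
through a two-dimensional space, so its rank is `2`.
-/

open Matrix Module

theorem LinearMap.finrank_range_prodMap {K V V' W W' : Type*} [Field K]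
    [AddCommGroup V] [Module K V] [AddCommGroup V'] [Module K V']
    [AddCommGroup W] [Module K W] [AddCommGroup W'] [Module K W']
    [FiniteDimensional K V] [FiniteDimensional K W] (f : V →ₗ[K] V') (g : W →ₗ[K] W') :
    finrank K (range (f.prodMap g)) = finrank K (range f) + finrank K (range g) := by
  have hfactor : f.prodMap g =
      ((range f).subtype.prodMap (range g).subtype) ∘ₗ (f.rangeRestrict.prodMap g.rangeRestrict) :=
    rfl
  rw [hfactor, range_comp_of_range_eq_top, finrank_range_of_inj, Module.finrank_prod]
  · exact Prod.map_injective.mpr ⟨Subtype.val_injective, Subtype.val_injective⟩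
  · exact range_eq_top.mpr
      (Prod.map_surjective.mpr ⟨f.surjective_rangeRestrict, g.surjective_rangeRestrict⟩)

namespace Matrix

section Field

variable {K : Type*} [Field K]

theorem rank_fromBlocks_zero_zero {m n o p : Type*} [Fintype n] [Fintype p]
    (A : Matrix m n K) (D : Matrix o p K) :
    (fromBlocks A 0 0 D).rank = A.rank + D.rank := by
  have hmulVecLin : (fromBlocks A 0 0 D).mulVecLin =
      (LinearEquiv.sumArrowLequivProdArrow m o K K).symm.toLinearMap ∘ₗ
        (A.mulVecLin.prodMap D.mulVecLin) ∘ₗ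
          (LinearEquiv.sumArrowLequivProdArrow n p K K).toLinearMap := by
    ext x i
    cases i <;> simp [fromBlocks_mulVec] <;> rfl
  rw [rank, hmulVecLin, LinearMap.range_comp, LinearMap.range_comp, LinearEquiv.range,
    Submodule.map_top, LinearEquiv.finrank_map_eq, LinearMap.finrank_range_prodMap, rank, rank]

theorem rank_fromBlocks_of_isUnit_det₁₁ {m n : Type*} [Fintype m] [Fintype n]
    [DecidableEq m] [DecidableEq n] (A : Matrix m m K) (B : Matrix m n K) (C : Matrix n m K)
    (D : Matrix n n K) (hA : IsUnit A.det) :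
    (fromBlocks A B C D).rank = A.rank + (D - C * A⁻¹ * B).rank := by
  let := invertibleOfIsUnitDet A hA
  rw [fromBlocks_eq_of_invertible₁₁, rank_mul_eq_left_of_isUnit_det,
    rank_mul_eq_right_of_isUnit_det, rank_fromBlocks_zero_zero, invOf_eq_nonsing_inv]
  all_goals simp

end Field

section Bordered

variable {R : Type*} {m : Type*}

def bordered (A : Matrix m m R) (w : m → R) (c : R) : Matrix (m ⊕ Fin 1) (m ⊕ Fin 1) R :=
  fromBlocks A (replicateCol (Fin 1) w) (replicateRow (Fin 1) w) (of fun _ _ => c)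

variable [Fintype m]

theorem fromBlocks_transpose_mul_bordered_mul [CommRing R] (P A : Matrix m m R) (w : m → R)
    (c : R) :
    fromBlocks Pᵀ 0 0 1 * bordered A w c * fromBlocks P 0 0 1 =
      bordered (Pᵀ * A * P) (Pᵀ *ᵥ w) c := by
  simp only [bordered, fromBlocks_multiply, Matrix.mul_zero, Matrix.zero_mul, add_zero, zero_add,
    Matrix.one_mul, Matrix.mul_one, ← replicateCol_mulVec, ← replicateRow_vecMul,
    mulVec_transpose, zero_mulVec, replicateCol_zero]

theorem rank_bordered_mul_mul_transpose [DecidableEq m] [CommRing R] {U : Matrix m m R}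
    (hU : U * Uᵀ = 1) (D : Matrix m m R) (w : m → R) (c : R) :
    (bordered (U * D * Uᵀ) w c).rank = (bordered D (Uᵀ *ᵥ w) c).rank := by
  have hUtU : Uᵀ * U = 1 := mul_eq_one_comm.mp hU
  have hconj : Uᵀ * (U * D * Uᵀ) * U = D := by
    simp only [Matrix.mul_assoc, hUtU, Matrix.mul_one, ← Matrix.mul_assoc Uᵀ U, Matrix.one_mul]
  rw [← hconj, ← fromBlocks_transpose_mul_bordered_mul, hconj, rank_mul_eq_left_of_isUnit_det,
    rank_mul_eq_right_of_isUnit_det]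
  all_goals simpa [det_fromBlocks_zero₂₁] using isUnit_det_of_right_inverse hU

variable {K : Type*} [Field K]

theorem rank_bordered_diagonal [DecidableEq m] [DecidableEq K] (σ w : m → K) (c : K) :
    (bordered (diagonal σ) w c).rank =
      Fintype.card {i // σ i ≠ 0} +
        (bordered (0 : Matrix {i // σ i = 0} {i // σ i = 0} K) (fun i => w i)
          (c - ∑ i ∈ Finset.univ.filter (fun i => σ i ≠ 0), w i ^ 2 / σ i)).rank := by
  let e : {i // σ i ≠ 0} ⊕ ({i // σ i = 0} ⊕ Fin 1) ≃ m ⊕ Fin 1 :=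
    (Equiv.sumAssoc _ _ _).symm.trans
      (((Equiv.sumComm _ _).trans (Equiv.sumCompl fun i => σ i = 0)).sumCongr (Equiv.refl _))
  rw [← rank_submatrix _ e e]
  set N := (bordered (diagonal σ) w c).submatrix e e
  have h₁₁ : N.toBlocks₁₁ = diagonal fun i : {i // σ i ≠ 0} => σ i := by
    ext i j
    simp [N, e, bordered, toBlocks₁₁, diagonal_apply, Subtype.ext_iff]
  have hdet : IsUnit N.toBlocks₁₁.det := by
    rw [h₁₁, det_diagonal]
    exact IsUnit.mk0 _ (Finset.prod_ne_zero_iff.mpr fun i _ => i.2)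
  have hinv : (diagonal fun i : {i // σ i ≠ 0} => σ i)⁻¹ =
      diagonal fun i : {i // σ i ≠ 0} => (σ i)⁻¹ := by
    refine inv_eq_right_inv ?_
    rw [diagonal_mul_diagonal, ← diagonal_one]
    exact congrArg diagonal (funext fun i => mul_inv_cancel₀ i.2)
  have hne : ∀ (i : {i // σ i = 0}) (j : {i // σ i ≠ 0}), (i : m) ≠ j :=
    fun i j h => j.2 (h ▸ i.2)
  rw [← fromBlocks_toBlocks N, rank_fromBlocks_of_isUnit_det₁₁ _ _ _ _ hdet, h₁₁, rank_diagonal,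
    hinv]
  congr 1
  · exact Fintype.card_congr (Equiv.subtypeUnivEquiv fun i => i.2)
  · congr 1
    ext (i | _) (j | _)
    all_goals simp [N, e, bordered, toBlocks₂₂, toBlocks₂₁, toBlocks₁₂, mul_apply, diagonal_apply,
      hne, (hne _ _).symm]
    -- left over: the kernel–kernel entries and the corner entry
    · exact fun _ => i.2
    · rw [Finset.sum_subtype _ (p := fun x => ¬σ x = 0) (by simp)]
      exact Finset.sum_congr rfl fun i _ => by ring

theorem rank_bordered_zero_zero [DecidableEq K] (s : K) :
    (bordered (0 : Matrix m m K) 0 s).rank = if s = 0 then 0 else 1 := by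
  have hs : (of fun _ _ => s : Matrix (Fin 1) (Fin 1) K) = diagonal fun _ => s := by
    ext i j
    simp [Subsingleton.elim i j]
  rw [bordered, replicateCol_zero, replicateRow_zero, rank_fromBlocks_zero_zero, rank_zero, hs,
    rank_diagonal]
  split_ifs with h <;> simp [h]

theorem rank_bordered_zero_of_ne_zero {w : m → K} (hw : w ≠ 0) (s : K) :
    (bordered (0 : Matrix m m K) w s).rank = 2 := by
  obtain ⟨i, hi⟩ := Function.ne_iff.mp hw
  set B := bordered (0 : Matrix m m K) w s
  -- `B = u eᵀ + e w₀ᵀ` with `u = (w, s)`, `w₀ = (w, 0)` and `e` the last basis vector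
  have hfactor : B = (of fun r => ![Sum.elim w (fun _ => s) r, Sum.elim 0 1 r]) *
      of ![Sum.elim 0 1, Sum.elim w 0] := by
    ext (i | i) (j | j) <;> simp [B, bordered, mul_apply, Fin.sum_univ_two]
  have hminor :
      B.submatrix ![Sum.inl i, Sum.inr 0] ![Sum.inl i, Sum.inr 0] = !![0, w i; w i, s] := by
    ext a b
    fin_cases a <;> fin_cases b <;> simp [B, bordered]
  refine le_antisymm ?_ ?_
  · rw [hfactor]
    exact (rank_mul_le_left _ _).trans ((rank_le_card_width _).trans_eq (Fintype.card_fin 2))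
  · calc 2 = (!![0, w i; w i, s]).rank := by
          rw [rank_of_isUnit, Fintype.card_fin]
          simpa [isUnit_iff_isUnit_det, det_fin_two] using hi
      _ ≤ B.rank := hminor ▸ rank_submatrix_le _ _ _

end Bordered

end Matrix

open scoped Classical

theorem stmt13_general {n : ℕ}
    (A : Matrix (Fin n) (Fin n) ℝ)
    (U : Matrix (Fin n) (Fin n) ℝ) (hU : U * Uᵀ = 1)
    (σv : Fin n → ℝ) (hdecomp : A = U * Matrix.diagonal σv * Uᵀ)
    (b : Fin n → ℝ) (cst : ℝ)
    (M : Matrix (Fin n ⊕ Fin 1) (Fin n ⊕ Fin 1) ℝ)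
    (hM : M = Matrix.fromBlocks A (Matrix.of fun i _ => b i / 2)
      (Matrix.of fun _ j => b j / 2) (Matrix.of fun _ _ => cst))
    (bt : Fin n → ℝ) (hbt : bt = Uᵀ *ᵥ b)
    (S : ℝ)
    (hS : S = cst - ∑ j ∈ Finset.univ.filter (fun j => σv j ≠ 0), bt j ^ 2 / (4 * σv j))
    (K : Matrix ({i // σv i = 0} ⊕ Fin 1) ({i // σv i = 0} ⊕ Fin 1) ℝ)
    (hK : K = Matrix.fromBlocks 0 (Matrix.of fun i _ => bt i.1 / 2)
      (Matrix.of fun _ j => bt j.1 / 2) (Matrix.of fun _ _ => S)) :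
    M.rank = A.rank + K.rank ∧
    (M.rank = A.rank ↔ ((∀ i, σv i = 0 → bt i = 0) ∧ S = 0)) ∧
    (M.rank = A.rank + 1 ↔ ((∀ i, σv i = 0 → bt i = 0) ∧ S ≠ 0)) ∧
    (M.rank = A.rank + 2 ↔ ∃ i, σv i = 0 ∧ bt i ≠ 0) := by
  have hUb : Uᵀ *ᵥ (fun i => b i / 2) = fun i => bt i / 2 := by
    ext i
    simp [hbt, mulVec, dotProduct, Finset.sum_div, mul_div_assoc]
  have hrankA : A.rank = Fintype.card {i // σv i ≠ 0} := by
    have hUdet : IsUnit U.det := isUnit_det_of_right_inverse hU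
    rw [hdecomp, Matrix.mul_assoc, rank_mul_eq_right_of_isUnit_det _ _ hUdet,
      rank_mul_eq_left_of_isUnit_det _ _ (by simpa using hUdet), rank_diagonal]
  have hMb : M = bordered A (fun i => b i / 2) cst := hM
  have hKb : K = bordered 0 (fun i : {i // σv i = 0} => bt i / 2) S := hK
  have hmain : M.rank = A.rank + K.rank := by
    rw [hMb, hKb, hrankA, hdecomp, rank_bordered_mul_mul_transpose hU, hUb,
      rank_bordered_diagonal, hS]
    congr 4
    exact Finset.sum_congr rfl fun j _ => by ring
  refine ⟨hmain, ?_⟩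
  rw [hmain, hKb]
  by_cases hker : ∀ i, σv i = 0 → bt i = 0
  · have hw : (fun i : {i // σv i = 0} => bt i / 2) = 0 := funext fun i => by simp [hker i i.2]
    rw [hw, rank_bordered_zero_zero]
    split_ifs with hS0 <;> simpa [hS0] using hker
  · obtain ⟨i, hi, hbi⟩ : ∃ i, σv i = 0 ∧ bt i ≠ 0 := by simpa using hker
    have hw : (fun i : {i // σv i = 0} => bt i / 2) ≠ 0 :=
      Function.ne_iff.mpr ⟨⟨i, hi⟩, by simpa using hbi⟩
    rw [rank_bordered_zero_of_ne_zero hw]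
    simpa [hker] using ⟨i, hi, hbi⟩

theorem stmt13 {n : ℕ}
    (A : Matrix (Fin n) (Fin n) ℝ) (hA : A.IsSymm)
    (U : Matrix (Fin n) (Fin n) ℝ) (hU : U * Uᵀ = 1)
    (σv : Fin n → ℝ) (hdecomp : A = U * Matrix.diagonal σv * Uᵀ)
    (b : Fin n → ℝ) (cst : ℝ)
    (M : Matrix (Fin n ⊕ Fin 1) (Fin n ⊕ Fin 1) ℝ)
    (hM : M = Matrix.fromBlocks A (Matrix.of fun i _ => b i / 2)
      (Matrix.of fun _ j => b j / 2) (Matrix.of fun _ _ => cst))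
    (bt : Fin n → ℝ) (hbt : bt = Uᵀ *ᵥ b)
    (S : ℝ)
    (hS : S = cst - ∑ j ∈ Finset.univ.filter (fun j => σv j ≠ 0), bt j ^ 2 / (4 * σv j))
    (K : Matrix ({i // σv i = 0} ⊕ Fin 1) ({i // σv i = 0} ⊕ Fin 1) ℝ)
    (hK : K = Matrix.fromBlocks 0 (Matrix.of fun i _ => bt i.1 / 2)
      (Matrix.of fun _ j => bt j.1 / 2) (Matrix.of fun _ _ => S)) :
    M.rank = A.rank + K.rank ∧
    (M.rank = A.rank ↔ ((∀ i, σv i = 0 → bt i = 0) ∧ S = 0)) ∧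
    (M.rank = A.rank + 1 ↔ ((∀ i, σv i = 0 → bt i = 0) ∧ S ≠ 0)) ∧
    (M.rank = A.rank + 2 ↔ ∃ i, σv i = 0 ∧ bt i ≠ 0) :=
  stmt13_general A U hU σv hdecomp b cst M hM bt hbt S hS K hK
end
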